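/- Let N be an even positive integer, θ ∈ (0, π/2), α = (1/N)·arccos(cos^N θ), l ∈ {0, …, N−1}, and λ = exp(iα)·ω^l or λ = exp(−iα)·ω^l. Then Σ_{n=0}^{N−1} ( |a_n(λ)|² + |b_n(λ)|² ) = 2N. -/

import Mathlib

open Complex

/-- `ω = exp(2πi/N)`. -/
noncomputable def omegaN (N : ℕ) : ℂ := Complex.exp (2 * Real.pi * Complex.I / N)

/-- `a_n(λ) = ω^(−n(n−1)/2) · ∏_{j=0}^{n−1} (1 + λ⁻¹ωʲ/cosθ)/(1 + λω⁻ʲ/cosθ)`. -/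
noncomputable def aCoef (N : ℕ) (θ : ℝ) (lam : ℂ) (n : ℕ) : ℂ :=
  (omegaN N)⁻¹ ^ (n * (n - 1) / 2) *
    ∏ j ∈ Finset.range n,
      (1 + lam⁻¹ * omegaN N ^ j / (Real.cos θ : ℂ)) /
      (1 + lam * (omegaN N)⁻¹ ^ j / (Real.cos θ : ℂ))

/-- `b_n(λ) = a_n(λ)·tanθ/(1 + λω⁻ⁿ/cosθ)`. -/
noncomputable def bCoef (N : ℕ) (θ : ℝ) (lam : ℂ) (n : ℕ) : ℂ :=
  aCoef N θ lam n * (Real.tan θ : ℂ) / (1 + lam * (omegaN N)⁻¹ ^ n / (Real.cos θ : ℂ))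

/-!
Each factor of `aₙ(λ)` has the form `w̄ / w`, so `|aₙ| = 1`, while
`|bₙ|² = tan²θ / |1 - x ζⁿ|²` with `x = -λ / cos θ` and `ζ = ω⁻¹`. Splitting
`1 / ((1 - x u)(1 - x̄ / u))` into partial fractions and summing geometric series over the
`N`-th roots of unity gives
`∑ₙ 1 / |1 - x ζⁿ|² = N (1 - |x|²ᴺ) / ((1 - |x|²) |1 - xᴺ|²)`.
The choice of `α` makes `Re xᴺ = 1`, so `|1 - xᴺ|² = |x|²ᴺ - 1` and the sum collapses to
`N / (|x|² - 1) = N / tan²θ`.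
-/

open Finset ComplexConjugate

namespace IsPrimitiveRoot

variable {K : Type*} [Field K] {N : ℕ} {ζ : K}

theorem sum_pow_pow_eq_ite (hζ : IsPrimitiveRoot ζ N) {k : ℕ} (hk : k < N) :
    ∑ n ∈ range N, (ζ ^ k) ^ n = if k = 0 then (N : K) else 0 := by
  split_ifs with hk0
  · simp [hk0]
  · have hne : ζ ^ k ≠ 1 := hζ.pow_ne_one_of_pos_of_lt hk0 hk
    rw [geom_sum_eq hne, ← pow_mul, mul_comm, pow_mul, hζ.pow_eq_one, one_pow, sub_self,
      zero_div]

theorem sum_inv_one_sub_mul_pow (hζ : IsPrimitiveRoot ζ N) {a : K} (ha : a ^ N ≠ 1) :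
    ∑ n ∈ range N, (1 - a * ζ ^ n)⁻¹ = N / (1 - a ^ N) := by
  have hN : 0 < N := Nat.pos_of_ne_zero fun h => ha (by simp [h])
  have haN : 1 - a ^ N ≠ 0 := sub_ne_zero.mpr ha.symm
  have hterm (n : ℕ) : (1 - a * ζ ^ n)⁻¹ = (∑ k ∈ range N, a ^ k * (ζ ^ k) ^ n) / (1 - a ^ N) := by
    have hpow : (a * ζ ^ n) ^ N = a ^ N := by
      rw [mul_pow, ← pow_mul, mul_comm n, pow_mul, hζ.pow_eq_one, one_pow, mul_one]
    have hgeom := mul_neg_geom_sum (a * ζ ^ n) N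
    rw [hpow] at hgeom
    have hne : 1 - a * ζ ^ n ≠ 0 := fun h => haN (by rw [← hgeom, h, zero_mul])
    rw [eq_div_iff haN, ← hgeom, inv_mul_cancel_left₀ hne]
    exact sum_congr rfl fun k _ => by ring
  rw [sum_congr rfl fun n _ => hterm n, ← sum_div, sum_comm]
  rw [sum_congr rfl fun k hk => by rw [← mul_sum, hζ.sum_pow_pow_eq_ite (mem_range.mp hk)]]
  simp [hN]

theorem sum_inv_one_sub_mul_pow_mul_one_sub_mul_pow_inv (hζ : IsPrimitiveRoot ζ N) {z w : K}
    (hz : z ^ N ≠ 1) (hw : w ^ N ≠ 1) (hzw : z * w ≠ 1) :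
    ∑ n ∈ range N, ((1 - z * ζ ^ n) * (1 - w * (ζ ^ n)⁻¹))⁻¹
      = N / (1 - z * w) * (1 / (1 - z ^ N) + 1 / (1 - w ^ N) - 1) := by
  have hne {a u : K} (ha : a ^ N ≠ 1) (hu : u ^ N = 1) : 1 - a * u ≠ 0 := by
    intro h
    apply ha
    calc a ^ N = (a * u) ^ N := by rw [mul_pow, hu, mul_one]
      _ = 1 := by rw [← sub_eq_zero.mp h, one_pow]
  have hζn (n : ℕ) : (ζ ^ n) ^ N = 1 := by rw [← pow_mul, mul_comm, pow_mul, hζ.pow_eq_one, one_pow]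
  have hzw' : 1 - z * w ≠ 0 := sub_ne_zero.mpr hzw.symm
  have hN : N ≠ 0 := by rintro rfl; exact hz (pow_zero z)
  have hterm (n : ℕ) : ((1 - z * ζ ^ n) * (1 - w * (ζ ^ n)⁻¹))⁻¹
      = (1 - z * w)⁻¹ * ((1 - z * ζ ^ n)⁻¹ + (1 - w * ζ⁻¹ ^ n)⁻¹ - 1) := by
    have hu : ζ ^ n ≠ 0 := pow_ne_zero _ (hζ.ne_zero hN)
    have h1 := hne hz (hζn n)
    have h2 : ζ ^ n - w ≠ 0 := sub_ne_zero.mpr fun h => hw (by rw [← h, hζn])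
    rw [inv_pow]
    field_simp
    ring
  rw [sum_congr rfl fun n _ => hterm n, ← mul_sum, sum_sub_distrib, sum_add_distrib,
    hζ.sum_inv_one_sub_mul_pow hz, hζ.inv.sum_inv_one_sub_mul_pow hw]
  simp only [sum_const, card_range, nsmul_eq_mul, mul_one, one_div]
  ring

end IsPrimitiveRoot

theorem Complex.sum_inv_sq_norm_one_sub_mul_pow {N : ℕ} {ζ : ℂ} (hζ : IsPrimitiveRoot ζ N)
    {x : ℂ} (hx : ‖x‖ ≠ 1) :
    ∑ n ∈ range N, (‖1 - x * ζ ^ n‖ ^ 2)⁻¹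
      = N * (1 - ‖x‖ ^ (2 * N)) / ((1 - ‖x‖ ^ 2) * ‖1 - x ^ N‖ ^ 2) := by
  obtain rfl | hN := eq_or_ne N 0
  · simp
  have hζ1 : ‖ζ‖ = 1 := hζ.norm'_eq_one hN
  have hxN : x ^ N ≠ 1 := fun h => hx <| by
    rw [← pow_eq_one_iff_of_nonneg (norm_nonneg x) hN, ← norm_pow, h, norm_one]
  have hxN' : conj x ^ N ≠ 1 := by rwa [← map_pow, Ne, map_eq_one_iff _ (RingHom.injective _)]
  have hxx : x * conj x ≠ 1 := by
    rw [Complex.mul_conj', Ne, ← Complex.ofReal_pow, Complex.ofReal_eq_one,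
      pow_eq_one_iff_of_nonneg (norm_nonneg x) two_ne_zero]
    exact hx
  have hconj (n : ℕ) : conj (1 - x * ζ ^ n) = 1 - conj x * (ζ ^ n)⁻¹ := by
    rw [map_sub, map_one, map_mul, map_pow, ← Complex.inv_eq_conj hζ1, inv_pow]
  apply Complex.ofReal_injective
  push_cast
  simp only [pow_mul, ← Complex.mul_conj', hconj, map_sub, map_one, map_pow]
  rw [hζ.sum_inv_one_sub_mul_pow_mul_one_sub_mul_pow_inv hxN hxN' hxx]
  have h1 : 1 - x ^ N ≠ 0 := sub_ne_zero.mpr hxN.symm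
  have h2 : 1 - conj x ^ N ≠ 0 := sub_ne_zero.mpr hxN'.symm
  have h3 : 1 - x * conj x ≠ 0 := sub_ne_zero.mpr hxx.symm
  field_simp
  ring

theorem Real.cos_mem_Ioo_zero_one {θ : ℝ} (hθ : θ ∈ Set.Ioo 0 (Real.pi / 2)) :
    Real.cos θ ∈ Set.Ioo 0 1 :=
  ⟨Real.cos_pos_of_mem_Ioo ⟨by linarith [Real.pi_pos, hθ.1], hθ.2⟩, by
    simpa using Real.cos_lt_cos_of_nonneg_of_le_pi le_rfl (by linarith [Real.pi_pos, hθ.2]) hθ.1⟩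

theorem norm_omegaN (N : ℕ) : ‖omegaN N‖ = 1 := by
  simp [omegaN, Complex.norm_exp]

theorem isPrimitiveRoot_omegaN (N : ℕ) [NeZero N] : IsPrimitiveRoot (omegaN N) N :=
  Complex.isPrimitiveRoot_exp N (NeZero.ne N)

theorem omegaN_pow_self (N : ℕ) : omegaN N ^ N = 1 := by
  obtain rfl | hN := eq_or_ne N 0
  · exact pow_zero _
  · exact (Complex.isPrimitiveRoot_exp N hN).pow_eq_one

theorem exp_mul_omegaN_pow_pow (N l : ℕ) (t : ℂ) :
    (exp t * omegaN N ^ l) ^ N = exp (N * t) := by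
  rw [mul_pow, ← pow_mul, mul_comm l, pow_mul, omegaN_pow_self, one_pow, mul_one,
    Complex.exp_nat_mul]

section UnitParameter

variable {N l : ℕ} {α : ℝ} {lam : ℂ}
  (hlam : lam = exp (I * α) * omegaN N ^ l ∨ lam = exp (-(I * α)) * omegaN N ^ l)
include hlam

theorem norm_eq_one_of_eq_exp_mul_omegaN_pow : ‖lam‖ = 1 := by
  rcases hlam with rfl | rfl <;> simp [norm_omegaN, Complex.norm_exp]

theorem re_pow_eq_cos_of_eq_exp_mul_omegaN_pow : (lam ^ N).re = Real.cos (N * α) := by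
  rcases hlam with rfl | rfl <;> simp [exp_mul_omegaN_pow_pow, Complex.exp_re]

end UnitParameter

theorem Complex.sq_norm_one_sub_of_re_eq_one {y : ℂ} (hy : y.re = 1) :
    ‖1 - y‖ ^ 2 = ‖y‖ ^ 2 - 1 := by
  rw [Complex.sq_norm, Complex.sq_norm, Complex.normSq_apply, Complex.normSq_apply,
    Complex.sub_re, Complex.sub_im, hy]
  simp

theorem one_add_div_ofReal_ne_zero {v : ℂ} (hv : ‖v‖ = 1) {c : ℝ} (hc : |c| ≠ 1) :
    1 + v / c ≠ 0 := by
  intro h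
  obtain rfl | hc0 := eq_or_ne c 0
  · simp at h
  have hv' : v = -c := by
    have hdiv : v / c = -1 := by linear_combination h
    rwa [div_eq_iff (Complex.ofReal_ne_zero.mpr hc0), neg_one_mul] at hdiv
  rw [hv', norm_neg, Complex.norm_real, Real.norm_eq_abs] at hv
  exact hc hv

section Coefficients

variable {N : ℕ} {θ : ℝ} {lam : ℂ}

theorem norm_aCoef (hlam : ‖lam‖ = 1) (hc : |Real.cos θ| ≠ 1) (n : ℕ) :
    ‖aCoef N θ lam n‖ = 1 := by
  rw [aCoef, norm_mul, norm_pow, norm_inv, norm_omegaN, inv_one, one_pow, one_mul, norm_prod]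
  refine prod_eq_one fun j _ => ?_
  have hconj : 1 + lam⁻¹ * omegaN N ^ j / Real.cos θ
      = conj (1 + lam * (omegaN N)⁻¹ ^ j / Real.cos θ) := by
    rw [map_add, map_one, map_div₀, map_mul, map_pow, map_inv₀, Complex.conj_ofReal,
      ← Complex.inv_eq_conj hlam, ← Complex.inv_eq_conj (norm_omegaN N), inv_inv]
  rw [hconj, norm_div, Complex.norm_conj, div_self]
  exact norm_ne_zero_iff.mpr (one_add_div_ofReal_ne_zero (by simp [hlam, norm_omegaN]) hc)

theorem sq_norm_bCoef (hlam : ‖lam‖ = 1) (hc : |Real.cos θ| ≠ 1) (n : ℕ) :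
    ‖bCoef N θ lam n‖ ^ 2
      = Real.tan θ ^ 2 / ‖1 + lam * (omegaN N)⁻¹ ^ n / Real.cos θ‖ ^ 2 := by
  rw [bCoef, norm_div, norm_mul, norm_aCoef hlam hc, one_mul, Complex.norm_real,
    Real.norm_eq_abs, div_pow, sq_abs]

theorem sum_sq_norm_bCoef [NeZero N] (hlam : ‖lam‖ = 1) (hc : |Real.cos θ| ≠ 1) :
    ∑ n ∈ range N, ‖bCoef N θ lam n‖ ^ 2
      = Real.tan θ ^ 2 * (N * (1 - ‖-lam / Real.cos θ‖ ^ (2 * N))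
          / ((1 - ‖-lam / Real.cos θ‖ ^ 2) * ‖1 - (-lam / Real.cos θ) ^ N‖ ^ 2)) := by
  have hx : ‖-lam / Real.cos θ‖ ≠ 1 := by
    rw [norm_div, norm_neg, hlam, Complex.norm_real, Real.norm_eq_abs, one_div, Ne, inv_eq_one]
    exact hc
  have hfac (n : ℕ) : 1 + lam * (omegaN N)⁻¹ ^ n / Real.cos θ
      = 1 - (-lam / Real.cos θ) * (omegaN N)⁻¹ ^ n := by ring
  simp_rw [sq_norm_bCoef hlam hc, hfac, div_eq_mul_inv _ (_ ^ 2), ← mul_sum]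
  rw [Complex.sum_inv_sq_norm_one_sub_mul_pow (isPrimitiveRoot_omegaN N).inv hx]

end Coefficients

theorem psw_normalization_even_general (N : ℕ) [NeZero N] (hN : Even N)
    (θ : ℝ) (hθ : θ ∈ Set.Ioo 0 (Real.pi / 2))
    (α : ℝ) (hα : α = Real.arccos (Real.cos θ ^ N) / N)
    (l : ℕ)
    (lam : ℂ)
    (hlam : lam = Complex.exp (Complex.I * α) * omegaN N ^ l ∨
            lam = Complex.exp (-(Complex.I * α)) * omegaN N ^ l) :
    ∑ n ∈ Finset.range N,
        (‖aCoef N θ lam n‖ ^ 2 + ‖bCoef N θ lam n‖ ^ 2)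
      = 2 * N := by
  obtain ⟨hc0, hc1⟩ := Real.cos_mem_Ioo_zero_one hθ
  set c := Real.cos θ
  have hcabs : |c| ≠ 1 := by rw [abs_of_pos hc0]; exact hc1.ne
  have hlam1 := norm_eq_one_of_eq_exp_mul_omegaN_pow hlam
  have hx : ‖-lam / c‖ = c⁻¹ := by
    rw [norm_div, norm_neg, hlam1, Complex.norm_real, Real.norm_eq_abs, abs_of_pos hc0, one_div]
  -- `α` is chosen so that `Re λᴺ = cos (Nα) = cᴺ`; for even `N` this makes `Re (-λ/c)ᴺ = 1`.
  have hre : ((-lam / c) ^ N).re = 1 := by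
    rw [div_pow, hN.neg_pow, ← Complex.ofReal_pow, Complex.div_ofReal_re,
      re_pow_eq_cos_of_eq_exp_mul_omegaN_pow hlam, hα,
      mul_div_cancel₀ _ (Nat.cast_ne_zero.mpr (NeZero.ne N)),
      Real.cos_arccos (by linarith [pow_pos hc0 N]) (pow_le_one₀ hc0.le hc1.le),
      div_self (pow_pos hc0 N).ne']
  have hxN : ‖1 - (-lam / c) ^ N‖ ^ 2 = c⁻¹ ^ (2 * N) - 1 := by
    rw [Complex.sq_norm_one_sub_of_re_eq_one hre, norm_pow, hx, ← pow_mul, mul_comm]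
  have htan : Real.tan θ ^ 2 = c⁻¹ ^ 2 - 1 := by
    rw [inv_pow, ← Real.inv_one_add_tan_sq hc0.ne', inv_inv, add_sub_cancel_left]
  have hr : 1 < c⁻¹ := (one_lt_inv₀ hc0).mpr hc1
  have hr2N : c⁻¹ ^ (2 * N) - 1 ≠ 0 :=
    sub_ne_zero.mpr (one_lt_pow₀ hr (mul_ne_zero two_ne_zero (NeZero.ne N))).ne'
  have hr2 : 1 - c⁻¹ ^ 2 ≠ 0 := sub_ne_zero.mpr (one_lt_pow₀ hr two_ne_zero).ne
  rw [sum_add_distrib, sum_sq_norm_bCoef hlam1 hcabs, hx, hxN, htan]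
  simp only [norm_aCoef hlam1 hcabs, one_pow, sum_const, card_range, nsmul_eq_mul, mul_one]
  generalize c⁻¹ = r at hr2N hr2 ⊢
  field_simp
  ring

/-- for even positive `N`, `θ ∈ (0, π/2)`, `α = (1/N)·arccos(cosᴺθ)`,
and `λ = exp(±iα)·ωˡ` with `0 ≤ l ≤ N−1`,
`Σ_{n=0}^{N−1} (|a_n(λ)|² + |b_n(λ)|²) = 2N`. -/
theorem psw_normalization_even (N : ℕ) [NeZero N] (hN : Even N)
    (θ : ℝ) (hθ : θ ∈ Set.Ioo 0 (Real.pi / 2))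
    (α : ℝ) (hα : α = Real.arccos (Real.cos θ ^ N) / N)
    (l : ℕ) (hl : l ≤ N - 1)
    (lam : ℂ)
    (hlam : lam = Complex.exp (Complex.I * α) * omegaN N ^ l ∨
            lam = Complex.exp (-(Complex.I * α)) * omegaN N ^ l) :
    ∑ n ∈ Finset.range N,
        (‖aCoef N θ lam n‖ ^ 2 + ‖bCoef N θ lam n‖ ^ 2)
      = 2 * N :=
  psw_normalization_even_general N hN θ hθ α hα l lam hlam
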